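/- For η ≥ 1, μ > 0, x > 0 and y > 0, the moments of the partial non-central chi-squared distribution satisfy the recurrence Q_{η,μ}(x,y) = Q_{η,μ+1}(x,y) − η·Q_{η-1,μ+1}(x,y) − (y/x)^{μ/2} · y^η · e^{-x-y} · I_μ(2√(xy)). -/

import Mathlib

/-!
Expanding `I_{μ-1}(2√(xt))` in its power series and integrating term by term gives
`Q_{η,μ}(x,y) = e^{-x} ∑ₙ xⁿ Γ(η+μ+n, y) / (n! Γ(μ+n))`. In the series for `Q_{η,μ+1}` apply
`Γ(a+1, y) = a Γ(a, y) + y^a e^{-y}` with `a = η+μ+n` and split `a = (μ+n) + η`: since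
`Γ(μ+1+n) = (μ+n) Γ(μ+n)`, the part `μ+n` gives the series of `Q_{η,μ}`, the part `η` gives
`η Q_{η-1,μ+1}`, and the boundary terms `y^{η+μ+n} e^{-y}` sum to the Bessel series of
`I_μ(2√(xy))`.
-/

open Real MeasureTheory

/-- Modified Bessel function of the first kind `I_ν(z)` via its Maclaurin series. -/
noncomputable def besselI (ν z : ℝ) : ℝ :=
  (z / 2) ^ ν * ∑' n : ℕ, (z ^ 2 / 4) ^ n / (n.factorial * Real.Gamma (ν + n + 1))

/-- Upper incomplete gamma function `Γ(a, y)`. -/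
noncomputable def uGamma (a y : ℝ) : ℝ := ∫ t in Set.Ioi y, t ^ (a - 1) * Real.exp (-t)

/-- Regularized upper incomplete gamma function `Q_a(y) = Γ(a,y)/Γ(a)`. -/
noncomputable def regQ (a y : ℝ) : ℝ := uGamma a y / Real.Gamma a

/-- η-th moment of the partial non-central chi-squared distribution (Nuttall Q-function). -/
noncomputable def nuttallQ (η μ x y : ℝ) : ℝ :=
  x ^ ((1 - μ) / 2) *
    ∫ t in Set.Ioi y, t ^ (η + (μ - 1) / 2) * Real.exp (-t - x) *
      besselI (μ - 1) (2 * Real.sqrt (x * t))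

/-- Generalized Marcum Q-function. -/
noncomputable def marcumQ (μ x y : ℝ) : ℝ := nuttallQ 0 μ x y

/-- Complementary Marcum function `P_μ(x,y)`. -/
noncomputable def marcumP (μ x y : ℝ) : ℝ :=
  x ^ ((1 - μ) / 2) *
    ∫ t in Set.Ioc 0 y, t ^ ((μ - 1) / 2) * Real.exp (-t - x) *
      besselI (μ - 1) (2 * Real.sqrt (x * t))

open Set Filter Topology
open scoped Nat

lemma integrableOn_rpow_mul_exp_neg_Ioi {a y : ℝ} (ha : 0 < a) (hy : 0 ≤ y) :
    IntegrableOn (fun t => t ^ (a - 1) * exp (-t)) (Ioi y) :=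
  ((GammaIntegral_convergent ha).mono_set (Ioi_subset_Ioi hy)).congr_fun
    (fun _ _ => mul_comm _ _) measurableSet_Ioi

lemma uGamma_nonneg (a : ℝ) {y : ℝ} (hy : 0 ≤ y) : 0 ≤ uGamma a y :=
  setIntegral_nonneg measurableSet_Ioi fun t ht => by
    have ht₀ : 0 ≤ t := hy.trans (le_of_lt ht)
    positivity

lemma uGamma_le_Gamma {a y : ℝ} (ha : 0 < a) (hy : 0 ≤ y) : uGamma a y ≤ Gamma a := by
  rw [Gamma_eq_integral ha, uGamma]
  simp_rw [mul_comm _ (exp _)]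
  refine setIntegral_mono_set (GammaIntegral_convergent ha) ?_
    (Ioi_subset_Ioi hy).eventuallyLE
  filter_upwards [ae_restrict_mem measurableSet_Ioi] with t (ht : 0 < t)
  positivity

lemma uGamma_add_one {a y : ℝ} (ha : 0 < a) (hy : 0 < y) :
    uGamma (a + 1) y = a * uGamma a y + y ^ a * exp (-y) := by
  have hint : IntegrableOn (fun t => t ^ a * exp (-t)) (Ioi y) := by
    simpa using integrableOn_rpow_mul_exp_neg_Ioi (a := a + 1) (by linarith) hy.le
  have hint' : IntegrableOn (fun t => a * (t ^ (a - 1) * exp (-t))) (Ioi y) :=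
    (integrableOn_rpow_mul_exp_neg_Ioi ha hy.le).const_mul a
  have hderiv : ∀ t ∈ Ici y, HasDerivAt (fun t => -(t ^ a * exp (-t)))
      (t ^ a * exp (-t) - a * (t ^ (a - 1) * exp (-t))) t := by
    intro t ht
    have hrpow := hasDerivAt_rpow_const (p := a) (Or.inl (hy.trans_le ht).ne')
    refine ((hrpow.mul (hasDerivAt_neg t).exp).neg).congr_deriv ?_
    ring
  have hlim : Tendsto (fun t => -(t ^ a * exp (-t))) atTop (𝓝 0) := by
    simpa using (tendsto_rpow_mul_exp_neg_mul_atTop_nhds_zero a 1 one_pos).neg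
  have h := integral_Ioi_of_hasDerivAt_of_tendsto' hderiv (hint.sub hint') hlim
  rw [integral_sub hint hint', integral_const_mul] at h
  simp only [uGamma, add_sub_cancel_right]
  linarith

lemma summable_pow_div_factorial_mul_Gamma_mul_Gamma {r c ν : ℝ} (hr : 0 ≤ r) (hc : 0 < c)
    (hν : 0 < ν) :
    Summable fun n : ℕ => r ^ n / (n ! * Gamma (ν + n)) * Gamma (c + n) := by
  -- the ratio of consecutive terms is `r (c+n) / ((n+1)(ν+n)) ≤ r (c+ν) / (ν (n+1))`
  refine summable_of_ratio_norm_eventually_le (r := 1 / 2) (by norm_num) ?_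
  filter_upwards [tendsto_natCast_atTop_atTop.eventually_ge_atTop (2 * r * (c + ν) / ν)]
    with n hn
  have hcn : 0 < c + n := by positivity
  have hνn : 0 < ν + n := by positivity
  have hratio : r ^ (n + 1) / ((n + 1)! * Gamma (ν + ↑(n + 1))) * Gamma (c + ↑(n + 1)) =
      r ^ n / (n ! * Gamma (ν + n)) * Gamma (c + n) * (r * (c + n) / ((n + 1) * (ν + n))) := by
    push_cast
    rw [← add_assoc, ← add_assoc, Gamma_add_one hcn.ne', Gamma_add_one hνn.ne',
      Nat.factorial_succ]
    push_cast
    field_simp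
    ring
  rw [hratio, norm_mul, mul_comm (1 / 2 : ℝ)]
  refine mul_le_mul_of_nonneg_left ?_ (norm_nonneg _)
  rw [norm_of_nonneg (by positivity), div_le_iff₀ (by positivity)]
  rw [div_le_iff₀ hν] at hn
  nlinarith [mul_nonneg hr hc.le, mul_nonneg hr hν.le]

lemma summable_pow_div_factorial_mul_Gamma {r ν : ℝ} (hr : 0 ≤ r) (hν : 0 < ν) :
    Summable fun n : ℕ => r ^ n / (n ! * Gamma (ν + n)) := by
  refine (summable_pow_div_factorial_mul_Gamma_mul_Gamma hr two_pos hν).of_nonneg_of_le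
    (fun n => by positivity) fun n => le_mul_of_one_le_right (by positivity) ?_
  have h := Gamma_nat_eq_factorial (n + 1)
  push_cast at h
  rw [show (2 : ℝ) + n = n + 1 + 1 by ring, h]
  exact_mod_cast Nat.one_le_iff_ne_zero.mpr (Nat.factorial_ne_zero _)

lemma summable_pow_div_factorial_mul_Gamma_mul_uGamma {η μ x y : ℝ} (hη : 0 ≤ η) (hμ : 0 < μ)
    (hx : 0 ≤ x) (hy : 0 ≤ y) :
    Summable fun n : ℕ => x ^ n / (n ! * Gamma (μ + n)) * uGamma (η + μ + n) y :=
  (summable_pow_div_factorial_mul_Gamma_mul_Gamma hx (by positivity) hμ).of_nonneg_of_le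
    (fun n => mul_nonneg (by positivity) (uGamma_nonneg _ hy))
    fun n => mul_le_mul_of_nonneg_left (uGamma_le_Gamma (by positivity) hy) (by positivity)

lemma integral_Ioi_tsum_mul_rpow_mul_exp_neg {c a : ℕ → ℝ} {y : ℝ} (hc : ∀ n, 0 ≤ c n)
    (ha : ∀ n, 0 < a n) (hy : 0 ≤ y) (hs : Summable fun n => c n * uGamma (a n) y) :
    ∫ t in Ioi y, ∑' n, c n * (t ^ (a n - 1) * exp (-t)) = ∑' n, c n * uGamma (a n) y := by
  have hint : ∀ n, IntegrableOn (fun t => c n * (t ^ (a n - 1) * exp (-t))) (Ioi y) :=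
    fun n => (integrableOn_rpow_mul_exp_neg_Ioi (ha n) hy).const_mul (c n)
  have hnorm : ∀ n, ∫ t in Ioi y, ‖c n * (t ^ (a n - 1) * exp (-t))‖ = c n * uGamma (a n) y := by
    intro n
    rw [uGamma, ← integral_const_mul]
    refine setIntegral_congr_fun measurableSet_Ioi fun t ht => norm_of_nonneg ?_
    have hcn := hc n
    have ht₀ : 0 ≤ t := hy.trans (le_of_lt ht)
    positivity
  rw [← integral_tsum_of_summable_integral_norm hint (by simpa only [hnorm] using hs)]
  exact tsum_congr fun n => by rw [integral_const_mul, uGamma]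

lemma besselI_sub_one_two_mul_sqrt (ν : ℝ) {u : ℝ} (hu : 0 ≤ u) :
    besselI (ν - 1) (2 * √u) = u ^ ((ν - 1) / 2) * ∑' n : ℕ, u ^ n / (n ! * Gamma (ν + n)) := by
  have hsq : (2 * √u) ^ 2 / 4 = u := by rw [mul_pow, sq_sqrt hu]; ring
  rw [besselI, mul_div_cancel_left₀ _ two_ne_zero, hsq, sqrt_eq_rpow, ← rpow_mul hu,
    one_div_mul_eq_div]
  congr 1
  exact tsum_congr fun n => by ring_nf

lemma nuttallQ_integrand_eq_tsum (η μ : ℝ) {x t : ℝ} (hx : 0 ≤ x) (ht : 0 < t) :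
    t ^ (η + (μ - 1) / 2) * exp (-t - x) * besselI (μ - 1) (2 * √(x * t)) =
      exp (-x) * x ^ ((μ - 1) / 2) *
        ∑' n : ℕ, x ^ n / (n ! * Gamma (μ + n)) * (t ^ (η + μ + n - 1) * exp (-t)) := by
  rw [besselI_sub_one_two_mul_sqrt μ (mul_nonneg hx ht.le), mul_rpow hx ht.le,
    ← mul_assoc, ← tsum_mul_left, ← tsum_mul_left]
  refine tsum_congr fun n => ?_
  have hpow : t ^ (η + (μ - 1) / 2) * t ^ ((μ - 1) / 2) * t ^ n = t ^ (η + μ + n - 1) := by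
    rw [← rpow_natCast, ← rpow_add ht, ← rpow_add ht]
    ring_nf
  rw [← hpow, show -t - x = -t + -x by ring, exp_add, mul_pow]
  ring

lemma nuttallQ_eq_tsum {η μ x y : ℝ} (hη : 0 ≤ η) (hμ : 0 < μ) (hx : 0 < x) (hy : 0 ≤ y) :
    nuttallQ η μ x y =
      exp (-x) * ∑' n : ℕ, x ^ n / (n ! * Gamma (μ + n)) * uGamma (η + μ + n) y := by
  have hcancel : x ^ ((1 - μ) / 2) * x ^ ((μ - 1) / 2) = 1 := by
    rw [← rpow_add hx, show (1 - μ) / 2 + (μ - 1) / 2 = 0 by ring, rpow_zero]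
  rw [nuttallQ, setIntegral_congr_fun measurableSet_Ioi fun t ht =>
      nuttallQ_integrand_eq_tsum η μ hx.le (hy.trans_lt ht),
    integral_const_mul, integral_Ioi_tsum_mul_rpow_mul_exp_neg (fun n => by positivity)
      (fun n => by positivity) hy (summable_pow_div_factorial_mul_Gamma_mul_uGamma hη hμ hx.le hy)]
  linear_combination (exp (-x) *
    ∑' n : ℕ, x ^ n / (n ! * Gamma (μ + n)) * uGamma (η + μ + n) y) * hcancel

lemma div_rpow_mul_besselI_eq_tsum (η μ : ℝ) {x y : ℝ} (hx : 0 < x) (hy : 0 < y) :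
    (y / x) ^ (μ / 2) * y ^ η * exp (-x - y) * besselI μ (2 * √(x * y)) =
      exp (-x) * (exp (-y) * y ^ (η + μ) *
        ∑' n : ℕ, (x * y) ^ n / (n ! * Gamma (μ + 1 + n))) := by
  have hbessel := besselI_sub_one_two_mul_sqrt (μ + 1) (mul_pos hx hy).le
  rw [add_sub_cancel_right] at hbessel
  have hpow : (y / x) ^ (μ / 2) * (x * y) ^ (μ / 2) = y ^ μ := by
    rw [← mul_rpow (div_pos hy hx).le (mul_pos hx hy).le,
      show y / x * (x * y) = y ^ (2 : ℝ) by field_simp; norm_cast, ← rpow_mul hy.le]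
    ring_nf
  rw [hbessel, rpow_add hy, ← hpow, sub_eq_add_neg, exp_add]
  ring

lemma mul_uGamma_succ_eq (η μ x : ℝ) {y : ℝ} (hη : 0 ≤ η) (hμ : 0 < μ) (hy : 0 < y) (n : ℕ) :
    x ^ n / (n ! * Gamma (μ + 1 + n)) * uGamma (η + (μ + 1) + n) y =
      x ^ n / (n ! * Gamma (μ + n)) * uGamma (η + μ + n) y +
        (η * (x ^ n / (n ! * Gamma (μ + 1 + n)) * uGamma (η - 1 + (μ + 1) + n) y) +
          exp (-y) * y ^ (η + μ) * ((x * y) ^ n / (n ! * Gamma (μ + 1 + n)))) := by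
  have hμn : 0 < μ + n := by positivity
  have hGamma : Gamma (μ + 1 + n) = (μ + n) * Gamma (μ + n) := by
    rw [add_right_comm, Gamma_add_one hμn.ne']
  have huGamma : uGamma (η + (μ + 1) + n) y =
      (η + μ + n) * uGamma (η + μ + n) y + y ^ (η + μ) * y ^ n * exp (-y) := by
    rw [show η + (μ + 1) + n = η + μ + n + 1 by ring, uGamma_add_one (by positivity) hy,
      rpow_add hy, rpow_natCast]
  rw [huGamma, hGamma, show η - 1 + (μ + 1) + n = η + μ + n by ring, mul_pow]
  have hGamma₀ : Gamma (μ + n) ≠ 0 := by positivity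
  field_simp
  ring

theorem nuttallQ_recurrence (η μ x y : ℝ) (hη : 1 ≤ η) (hμ : 0 < μ) (hx : 0 < x) (hy : 0 < y) :
    nuttallQ η μ x y =
      nuttallQ η (μ + 1) x y - η * nuttallQ (η - 1) (μ + 1) x y -
        (y / x) ^ (μ / 2) * y ^ η * Real.exp (-x - y) * besselI μ (2 * Real.sqrt (x * y)) := by
  have hη₀ : 0 ≤ η := by linarith
  have hμ₁ : 0 < μ + 1 := by linarith
  have hQ := summable_pow_div_factorial_mul_Gamma_mul_uGamma hη₀ hμ hx.le hy.le
  have hQ' := (summable_pow_div_factorial_mul_Gamma_mul_uGamma (η := η - 1) (by linarith) hμ₁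
    hx.le hy.le).mul_left η
  have hI := (summable_pow_div_factorial_mul_Gamma (mul_pos hx hy).le hμ₁).mul_left
    (exp (-y) * y ^ (η + μ))
  rw [nuttallQ_eq_tsum hη₀ hμ hx hy.le, nuttallQ_eq_tsum hη₀ hμ₁ hx hy.le,
    nuttallQ_eq_tsum (by linarith) hμ₁ hx hy.le, div_rpow_mul_besselI_eq_tsum η μ hx hy,
    tsum_congr (mul_uGamma_succ_eq η μ x hη₀ hμ hy), hQ.tsum_add (hQ'.add hI), hQ'.tsum_add hI,
    tsum_mul_left, tsum_mul_left]
  ring
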